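/- The function m(t) = Σ_k k·p_k(t), where p(t) = p(0)e^{tQ} is the distribution of the voter model birth-and-death chain with stubborn nodes, satisfies the linear ODE m'(t) = (s1·n - (s0+s1)·m(t))/(n-1). -/

import Mathlib

noncomputable def deathRate (n s1 k : ℕ) : ℝ :=
  ((k : ℝ) - s1) * ((n : ℝ) - k) / ((n : ℝ) - 1)

noncomputable def birthRate (n s0 k : ℕ) : ℝ :=
  (k : ℝ) * ((n : ℝ) - k - s0) / ((n : ℝ) - 1)

noncomputable def Qmat (n s0 s1 : ℕ) : Matrix (Fin (n + 1)) (Fin (n + 1)) ℝ :=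
  fun k j =>
    if s1 ≤ (k : ℕ) ∧ (k : ℕ) + s0 ≤ n then
      if (j : ℕ) + 1 = (k : ℕ) then deathRate n s1 k
      else if (j : ℕ) = (k : ℕ) + 1 then birthRate n s0 k
      else if (j : ℕ) = (k : ℕ) then -(deathRate n s1 k + birthRate n s0 k)
      else 0
    else 0

/-!
Along `p(t) = p(0) e^{tQ}` one has `d/dt (p(t) ⬝ᵥ w) = p(t) ⬝ᵥ Q w`, so `p(t) ⬝ᵥ w` is conserved
whenever `Q w = 0`. For the voter chain this applies to `w = 1` (rows of `Q` sum to zero: total mass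
is conserved) and to the indicator of every state outside `{s1, …, n - s0}` (its column of `Q`
vanishes, since the rates leading out of the range vanish at its endpoints: the chain stays in
the range). With `κ k = k`, inside the range `(Q κ)_i = birth_i - death_i =
(s1 n - (s0 + s1) i) / (n - 1)` is affine in `i`, and averaging it against `p(t)` gives the ODE.
-/

open Matrix NormedSpace

namespace Matrix

variable {ι : Type*} [Fintype ι] [DecidableEq ι]

section

attribute [local instance] Matrix.linftyOpNormedRing Matrix.linftyOpNormedAlgebra

theorem hasDerivAt_dotProduct_vecMul_exp_smul (w p : ι → ℝ) (Q : Matrix ι ι ℝ) (t : ℝ) :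
    HasDerivAt (fun u : ℝ => w ⬝ᵥ p ᵥ* exp (u • Q)) ((Q *ᵥ w) ⬝ᵥ p ᵥ* exp (t • Q)) t := by
  let L : Matrix ι ι ℝ →ₗ[ℝ] ℝ :=
    { toFun := fun M => w ⬝ᵥ p ᵥ* M
      map_add' := fun M N => by simp only [vecMul_add, dotProduct_add]
      map_smul' := fun c M => by simp only [vecMul_smul, dotProduct_smul, RingHom.id_apply] }
  refine ((LinearMap.toContinuousLinearMap L).hasFDerivAt.comp_hasDerivAt t
    (hasDerivAt_exp_smul_const Q t)).congr_deriv ?_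
  change w ⬝ᵥ p ᵥ* (exp (t • Q) * Q) = _
  rw [← vecMul_vecMul, dotProduct_comm, ← dotProduct_mulVec, dotProduct_comm]

end

theorem dotProduct_vecMul_exp_smul_of_mulVec_eq_zero {w : ι → ℝ} {Q : Matrix ι ι ℝ}
    (hw : Q *ᵥ w = 0) (p : ι → ℝ) (t : ℝ) : w ⬝ᵥ p ᵥ* exp (t • Q) = w ⬝ᵥ p := by
  have hderiv := hasDerivAt_dotProduct_vecMul_exp_smul w p Q
  have := is_const_of_deriv_eq_zero (fun u => (hderiv u).differentiableAt)
    (fun u => by rw [(hderiv u).deriv, hw, zero_dotProduct]) t 0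
  simpa using this

end Matrix

theorem deathRate_self (n s1 : ℕ) : deathRate n s1 s1 = 0 := by
  simp [deathRate]

theorem birthRate_eq_zero_of_add_eq {n s0 k : ℕ} (h : k + s0 = n) : birthRate n s0 k = 0 := by
  subst h
  simp [birthRate]

variable {n s0 s1 : ℕ}

theorem Qmat_apply_of_row_out_of_range {i : Fin (n + 1)} (hi : ¬(s1 ≤ (i : ℕ) ∧ (i : ℕ) + s0 ≤ n))
    (j : Fin (n + 1)) : Qmat n s0 s1 i j = 0 :=
  if_neg hi

theorem Qmat_apply_of_col_out_of_range {j : Fin (n + 1)} (hj : (j : ℕ) < s1 ∨ n < (j : ℕ) + s0)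
    (i : Fin (n + 1)) : Qmat n s0 s1 i j = 0 := by
  by_cases hi : s1 ≤ (i : ℕ) ∧ (i : ℕ) + s0 ≤ n
  · simp only [Qmat, if_pos hi]
    split_ifs
    · rw [show (i : ℕ) = s1 by omega, deathRate_self]
    · exact birthRate_eq_zero_of_add_eq (by omega)
    · omega
    · rfl
  · exact Qmat_apply_of_row_out_of_range hi j

theorem Qmat_mulVec_apply (g : ℕ → ℝ) {i : Fin (n + 1)} (hi : s1 ≤ (i : ℕ) ∧ (i : ℕ) + s0 ≤ n) :
    (Qmat n s0 s1 *ᵥ fun k => g k) i =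
      deathRate n s1 i * (g (i - 1) - g i) + birthRate n s0 i * (g (i + 1) - g i) := by
  set d := deathRate n s1 i
  set b := birthRate n s0 i
  have hrow : ∀ k : ℕ, (if k + 1 = (i : ℕ) then d else if k = i + 1 then b
        else if k = i then -(d + b) else 0) * g k =
      ((if k + 1 = (i : ℕ) then d * g k else 0) + (if k = i + 1 then b * g k else 0)) +
        (if k = i then -(d + b) * g k else 0) := by
    intro k
    split_ifs <;> first | omega | ring
  simp only [mulVec, dotProduct, Qmat, if_pos hi]
  rw [Fin.sum_univ_eq_sum_range (fun k => (if k + 1 = (i : ℕ) then d else if k = i + 1 then b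
        else if k = i then -(d + b) else 0) * g k), Finset.sum_congr rfl fun k _ => hrow k,
    Finset.sum_add_distrib, Finset.sum_add_distrib, Finset.sum_ite_eq', Finset.sum_ite_eq',
    if_pos (Finset.mem_range.2 i.isLt)]
  have hdeath : ∑ k ∈ Finset.range (n + 1), (if k + 1 = (i : ℕ) then d * g k else 0) =
      d * g (i - 1) := by
    rcases Nat.eq_zero_or_eq_succ_pred (i : ℕ) with h0 | hsucc
    · simp [h0, show d = 0 by simp only [d, h0, show s1 = 0 by omega, deathRate_self]]
    · rw [hsucc]
      simp
  have hbirth : (if (i : ℕ) + 1 ∈ Finset.range (n + 1) then b * g (i + 1) else 0) =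
      b * g (i + 1) := by
    by_cases hlt : (i : ℕ) + 1 < n + 1
    · rw [if_pos (Finset.mem_range.2 hlt)]
    · rw [if_neg (by simpa using hlt),
        show b = 0 from birthRate_eq_zero_of_add_eq (by omega), zero_mul]
  rw [hdeath, hbirth]
  ring

theorem Qmat_mulVec_one : Qmat n s0 s1 *ᵥ 1 = 0 := by
  ext i
  by_cases hi : s1 ≤ (i : ℕ) ∧ (i : ℕ) + s0 ≤ n
  · exact (Qmat_mulVec_apply (fun _ => 1) hi).trans (by simp)
  · simp [mulVec, Qmat_apply_of_row_out_of_range hi]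

theorem Qmat_mulVec_single_eq_zero {j : Fin (n + 1)} (hj : (j : ℕ) < s1 ∨ n < (j : ℕ) + s0) :
    Qmat n s0 s1 *ᵥ Pi.single j 1 = 0 := by
  ext i
  simp [Qmat_apply_of_col_out_of_range hj]

theorem Qmat_mulVec_natCast_apply {i : Fin (n + 1)} (hi : s1 ≤ (i : ℕ) ∧ (i : ℕ) + s0 ≤ n) :
    (Qmat n s0 s1 *ᵥ fun k => ((k : ℕ) : ℝ)) i =
      ((s1 : ℝ) * n - ((s0 : ℝ) + s1) * (i : ℕ)) / ((n : ℝ) - 1) := by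
  rw [Qmat_mulVec_apply Nat.cast hi]
  rcases Nat.eq_zero_or_pos (i : ℕ) with h0 | hpos
  · simp [h0, show s1 = 0 by omega, deathRate, birthRate]
  · push_cast [Nat.cast_sub hpos]
    simp only [deathRate, birthRate]
    ring

theorem Qmat_mulVec_natCast_dotProduct {v : Fin (n + 1) → ℝ}
    (hv : ∀ k : Fin (n + 1), ((k : ℕ) < s1 ∨ n < (k : ℕ) + s0) → v k = 0)
    (hmass : ∑ k, v k = 1) :
    (Qmat n s0 s1 *ᵥ fun k => ((k : ℕ) : ℝ)) ⬝ᵥ v =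
      ((s1 : ℝ) * n - ((s0 : ℝ) + s1) * ((fun k : Fin (n + 1) => ((k : ℕ) : ℝ)) ⬝ᵥ v)) /
        ((n : ℝ) - 1) := by
  have hterm : ∀ k, (Qmat n s0 s1 *ᵥ fun k => ((k : ℕ) : ℝ)) k * v k =
      ((s1 : ℝ) * n * v k - ((s0 : ℝ) + s1) * (((k : ℕ) : ℝ) * v k)) / ((n : ℝ) - 1) := by
    intro k
    by_cases hk : s1 ≤ (k : ℕ) ∧ (k : ℕ) + s0 ≤ n
    · rw [Qmat_mulVec_natCast_apply hk]
      ring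
    · rw [hv k (by omega)]
      simp
  simp only [dotProduct, hterm, ← Finset.sum_div, Finset.sum_sub_distrib, ← Finset.mul_sum, hmass,
    mul_one]

theorem mean_satisfies_ode_general (n s0 s1 : ℕ)
    (p0 : Fin (n + 1) → ℝ) (hsum : ∑ k, p0 k = 1)
    (hsupp : ∀ k : Fin (n + 1), ((k : ℕ) < s1 ∨ n < (k : ℕ) + s0) → p0 k = 0) :
    ∀ t : ℝ,
      HasDerivAt
        (fun t : ℝ => ∑ k : Fin (n + 1),
          ((k : ℕ) : ℝ) * Matrix.vecMul p0 (NormedSpace.exp (t • Qmat n s0 s1)) k)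
        (((s1 : ℝ) * n - ((s0 : ℝ) + s1) *
            (∑ k : Fin (n + 1),
              ((k : ℕ) : ℝ) * Matrix.vecMul p0 (NormedSpace.exp (t • Qmat n s0 s1)) k)) /
          ((n : ℝ) - 1)) t := by
  intro t
  have hmass : ∑ k, (p0 ᵥ* exp (t • Qmat n s0 s1)) k = 1 := by
    rw [← one_dotProduct, dotProduct_vecMul_exp_smul_of_mulVec_eq_zero Qmat_mulVec_one,
      one_dotProduct, hsum]
  have hstays : ∀ k : Fin (n + 1), ((k : ℕ) < s1 ∨ n < (k : ℕ) + s0) →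
      (p0 ᵥ* exp (t • Qmat n s0 s1)) k = 0 := by
    intro k hk
    rw [← single_one_dotProduct k (p0 ᵥ* exp (t • Qmat n s0 s1)),
      dotProduct_vecMul_exp_smul_of_mulVec_eq_zero (Qmat_mulVec_single_eq_zero hk),
      single_one_dotProduct, hsupp k hk]
  have hderiv := hasDerivAt_dotProduct_vecMul_exp_smul (fun k : Fin (n + 1) => ((k : ℕ) : ℝ)) p0
    (Qmat n s0 s1) t
  rwa [Qmat_mulVec_natCast_dotProduct hstays hmass] at hderiv

/-- The mean `m(t) = Σ_k k·p_k(t)` of the distribution `p(t) = p(0)e^{tQ}` of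
the voter model birth-and-death chain with stubborn nodes satisfies the linear
ODE `m'(t) = (s1·n - (s0 + s1)·m(t))/(n - 1)`. -/
theorem mean_satisfies_ode (n s0 s1 : ℕ) (hn : 2 ≤ n)
    (hpos : 0 < s0 + s1) (hle : s0 + s1 ≤ n)
    (p0 : Fin (n + 1) → ℝ) (hp0 : ∀ k, 0 ≤ p0 k) (hsum : ∑ k, p0 k = 1)
    (hsupp : ∀ k : Fin (n + 1), ((k : ℕ) < s1 ∨ n < (k : ℕ) + s0) → p0 k = 0) :
    ∀ t : ℝ,
      HasDerivAt
        (fun t : ℝ => ∑ k : Fin (n + 1),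
          ((k : ℕ) : ℝ) * Matrix.vecMul p0 (NormedSpace.exp (t • Qmat n s0 s1)) k)
        (((s1 : ℝ) * n - ((s0 : ℝ) + s1) *
            (∑ k : Fin (n + 1),
              ((k : ℕ) : ℝ) * Matrix.vecMul p0 (NormedSpace.exp (t • Qmat n s0 s1)) k)) /
          ((n : ℝ) - 1)) t :=
  mean_satisfies_ode_general n s0 s1 p0 hsum hsupp
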